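/- Let λ > 0, f continuous on [0,L], and let u be a C^3 solution on [0,L] of λu + D^3u = f with u(0) = u(L) = Du(L) = 0. Then ∫_0^L u(x)^2 dx ≤ (1/λ^2) ∫_0^L f(x)^2 dx. -/

import Mathlib

/-!
Multiplying the equation by `u` and integrating by parts twice, the boundary conditions
give `∫ u D³u = (Du 0)² / 2 ≥ 0`, hence `λ ∫ u² ≤ ∫ u f`.
Young's inequality `2λuf ≤ λ²u² + f²` then turns this into `λ² ∫ u² ≤ ∫ f²`.
-/

noncomputable def D (L : ℝ) (u : ℝ → ℝ) (i : ℕ) (x : ℝ) : ℝ :=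
  iteratedDerivWithin i u (Set.Icc 0 L) x

open Set intervalIntegral
open MeasureTheory (volume)
open scoped ContDiff

theorem ContDiffOn.hasDerivWithinAt_iteratedDerivWithin {𝕜 F : Type*}
    [NontriviallyNormedField 𝕜] [NormedAddCommGroup F] [NormedSpace 𝕜 F]
    {f : 𝕜 → F} {s : Set 𝕜} {x : 𝕜} {n : ℕ∞ω} {m : ℕ}
    (h : ContDiffOn 𝕜 n f s) (hmn : m < n) (hs : UniqueDiffOn 𝕜 s) (hx : x ∈ s) :
    HasDerivWithinAt (iteratedDerivWithin m f s) (iteratedDerivWithin (m + 1) f s x) s x := by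
  rw [iteratedDerivWithin_succ]
  exact (h.differentiableOn_iteratedDerivWithin hmn hs x hx).hasDerivWithinAt

theorem integral_mul_iteratedDerivWithin_three {a b : ℝ} (hab : a < b) {u : ℝ → ℝ}
    (hu : ContDiffOn ℝ 3 u (Icc a b)) (ha : u a = 0) (hb : u b = 0)
    (h1b : iteratedDerivWithin 1 u (Icc a b) b = 0) :
    ∫ x in a..b, u x * iteratedDerivWithin 3 u (Icc a b) x =
      iteratedDerivWithin 1 u (Icc a b) a ^ 2 / 2 := by
  set d : ℕ → ℝ → ℝ := fun m => iteratedDerivWithin m u (Icc a b)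
  have hI : uIcc a b = Icc a b := uIcc_of_le hab.le
  have hderiv : ∀ m < 3, ∀ x ∈ uIcc a b, HasDerivWithinAt (d m) (d (m + 1) x) (uIcc a b) x :=
    fun m hm x hx => hI ▸ hu.hasDerivWithinAt_iteratedDerivWithin (by exact_mod_cast hm)
      (uniqueDiffOn_Icc hab) (hI ▸ hx)
  have hint : ∀ m ≤ 3, IntervalIntegrable (d m) volume a b := fun m hm =>
    (hu.continuousOn_iteratedDerivWithin (by exact_mod_cast hm)
      (uniqueDiffOn_Icc hab)).intervalIntegrable_of_Icc hab.le
  have hd0 : d 0 = u := iteratedDerivWithin_zero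
  have parts₁ : ∫ x in a..b, u x * d 3 x =
      u b * d 2 b - u a * d 2 a - ∫ x in a..b, d 1 x * d 2 x :=
    hd0 ▸ integral_mul_deriv_eq_deriv_mul_of_hasDerivWithinAt (hderiv 0 (by norm_num))
      (hderiv 2 (by norm_num)) (hint 1 (by norm_num)) (hint 3 le_rfl)
  have parts₂ : ∫ x in a..b, d 1 x * d 2 x = d 1 b * d 1 b - d 1 a * d 1 a -
      ∫ x in a..b, d 2 x * d 1 x :=
    integral_mul_deriv_eq_deriv_mul_of_hasDerivWithinAt (hderiv 1 (by norm_num))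
      (hderiv 1 (by norm_num)) (hint 2 (by norm_num)) (hint 2 (by norm_num))
  change d 1 b = 0 at h1b
  change ∫ x in a..b, u x * d 3 x = d 1 a ^ 2 / 2
  simp_rw [mul_comm (d 2 _), h1b] at parts₂
  rw [parts₁, ha, hb]
  linarith

theorem integral_sq_le_of_mul_integral_sq_le_integral_mul {a b lam : ℝ} {u f : ℝ → ℝ}
    (hab : a ≤ b) (hlam : 0 < lam) (hu : IntervalIntegrable (fun x => u x ^ 2) volume a b)
    (hf : IntervalIntegrable (fun x => f x ^ 2) volume a b)
    (huf : IntervalIntegrable (fun x => u x * f x) volume a b)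
    (h : lam * ∫ x in a..b, u x ^ 2 ≤ ∫ x in a..b, u x * f x) :
    ∫ x in a..b, u x ^ 2 ≤ 1 / lam ^ 2 * ∫ x in a..b, f x ^ 2 := by
  have young : 2 * lam * ∫ x in a..b, u x * f x ≤
      lam ^ 2 * (∫ x in a..b, u x ^ 2) + ∫ x in a..b, f x ^ 2 := by
    rw [← integral_const_mul, ← integral_const_mul, ← integral_add (hu.const_mul _) hf]
    refine integral_mono_on hab (huf.const_mul _) ((hu.const_mul _).add hf) fun x _ => ?_
    nlinarith [two_mul_le_add_sq (lam * u x) (f x)]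
  rw [one_div, ← div_eq_inv_mul, le_div_iff₀ (by positivity)]
  nlinarith

theorem stmt_10 (L : ℝ) (hL : 0 < L) (lam : ℝ) (hlam : 0 < lam)
    (u f : ℝ → ℝ) (hu : ContDiffOn ℝ 3 u (Set.Icc 0 L))
    (hf : ContinuousOn f (Set.Icc 0 L))
    (heq : ∀ x ∈ Set.Ioo (0:ℝ) L, lam * u x + D L u 3 x = f x)
    (h0 : u 0 = 0) (hLv : u L = 0) (h1L : D L u 1 L = 0) :
    ∫ x in (0:ℝ)..L, (u x) ^ 2 ≤ (1 / lam ^ 2) * ∫ x in (0:ℝ)..L, (f x) ^ 2 := by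
  have hcu : ContinuousOn u (Icc 0 L) := hu.continuousOn
  have hc3 : ContinuousOn (D L u 3) (Icc 0 L) :=
    hu.continuousOn_iteratedDerivWithin le_rfl (uniqueDiffOn_Icc hL)
  have huD3 : IntervalIntegrable (fun x => u x * D L u 3 x) volume 0 L :=
    (hcu.mul hc3).intervalIntegrable_of_Icc hL.le
  have hu2 : IntervalIntegrable (fun x => u x ^ 2) volume 0 L :=
    (hcu.pow 2).intervalIntegrable_of_Icc hL.le
  have parts : ∫ x in (0:ℝ)..L, u x * D L u 3 x = D L u 1 0 ^ 2 / 2 :=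
    integral_mul_iteratedDerivWithin_three hL hu h0 hLv h1L
  have energy : ∫ x in (0:ℝ)..L, u x * f x =
      lam * (∫ x in (0:ℝ)..L, u x ^ 2) + D L u 1 0 ^ 2 / 2 := by
    rw [← parts, ← integral_const_mul, ← integral_add (hu2.const_mul lam) huD3]
    refine integral_congr_Ioo_of_le hL.le fun x hx => ?_
    rw [← heq x hx]
    ring
  refine integral_sq_le_of_mul_integral_sq_le_integral_mul hL.le hlam hu2
    ((hf.pow 2).intervalIntegrable_of_Icc hL.le) ((hcu.mul hf).intervalIntegrable_of_Icc hL.le) ?_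
  rw [energy]
  linarith [sq_nonneg (D L u 1 0)]
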